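/- Let d > −1 with d ≠ 0, let p be a probability vector on n ≥ 2 symbols, let j be an index, and let λ be a positive integer. Define lengths l by l_j = λ and l_i = ⌈ −log₂( p_i·(1 − 2^(−λ))/(1 − p_j) ) ⌉ for i ≠ j. Then R^d(p,l) < (1/d)·log₂( p_j^(1+d)·2^(dλ) + (1−p_j)^(1+d)·(2/(1 − 2^(−λ)))^d ) = λ + (1/d)·log₂( p_j^(1+d) + 2^d·(1−p_j)^(1+d)·(2^λ − 1)^(−d) ). -/

import Mathlib

open Real Finset

/-- Exponential redundancy `R^d(p,l)`. -/
noncomputable def expRedundancy (n : ℕ) (d : ℝ) (p : Fin n → ℝ) (l : Fin n → ℕ) : ℝ :=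
  (1 / d) * Real.logb 2 (∑ i, (p i) ^ (1 + d) * (2 : ℝ) ^ (d * (l i : ℝ)))

/-! For `i ≠ j`, `l i = ⌈-log₂ cᵢ⌉₊` with `cᵢ = p i (1 - 2^(-λ)) / (1 - p j) ≤ 1`, so
`2 ^ l i < 2 / cᵢ`. Replacing each such `2 ^ l i` by `2 / cᵢ` strictly increases
`(1/d) log₂ ∑ p i ^ (1+d) (2 ^ l i) ^ d` for either sign of `d`, and since
`p i ^ (1+d) (2 / cᵢ) ^ d` is proportional to `p i`, the enlarged sum collapses to the closed form. -/

theorem rpow_natCeil_neg_logb_lt_div {b c : ℝ} (hb : 1 < b) (hc : 0 < c) (hc1 : c ≤ 1) :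
    b ^ (⌈-logb b c⌉₊ : ℝ) < b / c := by
  have hb0 : 0 < b := by linarith
  calc b ^ (⌈-logb b c⌉₊ : ℝ) < b ^ (-logb b c + 1) :=
        rpow_lt_rpow_of_exponent_lt hb
          (Nat.ceil_lt_add_one (neg_nonneg.mpr (logb_nonpos hb hc.le hc1)))
    _ = b / c := by
        rw [rpow_add hb0, rpow_neg hb0.le, rpow_logb hb0 hb.ne' hc, rpow_one, div_eq_inv_mul]

theorem one_div_mul_logb_sum_mul_rpow_lt {ι : Type*} [Fintype ι] {b d : ℝ} (hb : 1 < b)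
    (hd : d ≠ 0) {w x y : ι → ℝ} (hw : ∀ i, 0 < w i) (hx : ∀ i, 0 < x i) (hxy : ∀ i, x i ≤ y i)
    {k : ι} (hk : x k < y k) :
    1 / d * logb b (∑ i, w i * x i ^ d) < 1 / d * logb b (∑ i, w i * y i ^ d) := by
  have hsum_pos : ∀ z : ι → ℝ, (∀ i, 0 < z i) → 0 < ∑ i, w i * z i ^ d := fun z hz =>
    sum_pos (fun i _ => mul_pos (hw i) (rpow_pos_of_pos (hz i) d)) ⟨k, mem_univ k⟩
  have hy : ∀ i, 0 < y i := fun i => (hx i).trans_le (hxy i)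
  rcases hd.lt_or_gt with hdneg | hdpos
  · have hsum : ∑ i, w i * y i ^ d < ∑ i, w i * x i ^ d :=
      sum_lt_sum (fun i _ => mul_le_mul_of_nonneg_left
          (rpow_le_rpow_of_nonpos (hx i) (hxy i) hdneg.le) (hw i).le)
        ⟨k, mem_univ k, mul_lt_mul_of_pos_left (rpow_lt_rpow_of_neg (hx k) hk hdneg) (hw k)⟩
    exact mul_lt_mul_of_neg_left (logb_lt_logb hb (hsum_pos y hy) hsum) (one_div_neg.mpr hdneg)
  · have hsum : ∑ i, w i * x i ^ d < ∑ i, w i * y i ^ d :=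
      sum_lt_sum (fun i _ => mul_le_mul_of_nonneg_left
          (rpow_le_rpow (hx i).le (hxy i) hdpos.le) (hw i).le)
        ⟨k, mem_univ k, mul_lt_mul_of_pos_left (rpow_lt_rpow (hx k).le hk hdpos) (hw k)⟩
    exact mul_lt_mul_of_pos_left (logb_lt_logb hb (hsum_pos x hx) hsum) (one_div_pos.mpr hdpos)

theorem add_le_one_of_sum_eq_one {ι : Type*} [Fintype ι] {p : ι → ℝ} (hp : ∀ i, 0 ≤ p i)
    (hpsum : ∑ i, p i = 1) {i j : ι} (hij : i ≠ j) : p i + p j ≤ 1 := by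
  classical
  rw [← sum_pair hij, ← hpsum]
  exact sum_le_sum_of_subset_of_nonneg (subset_univ _) fun k _ _ => hp k

theorem rpow_one_add_mul_div_rpow {x : ℝ} (hx : 0 < x) {a : ℝ} (ha : 0 ≤ a) (d : ℝ) :
    x ^ (1 + d) * (a / x) ^ d = x * a ^ d := by
  rw [div_rpow ha hx.le, rpow_add hx, rpow_one]
  field_simp [(rpow_pos_of_pos hx d).ne']

theorem rpow_natCeil_neg_logb_lt_of_ne {ι : Type*} [Fintype ι] {p : ι → ℝ} (hp : ∀ i, 0 < p i)
    (hpsum : ∑ i, p i = 1) {q : ℝ} (hq0 : 0 < q) (hq1 : q ≤ 1) {i j : ι} (hij : i ≠ j) :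
    (2 : ℝ) ^ (⌈-logb 2 (p i * q / (1 - p j))⌉₊ : ℝ) < (1 - p j) * (2 / q) / p i := by
  have hpi := hp i
  have hpij := add_le_one_of_sum_eq_one (fun i => (hp i).le) hpsum hij
  have hpj : 0 < 1 - p j := by linarith
  have hc1 : p i * q / (1 - p j) ≤ 1 := by
    rw [div_le_one hpj]
    nlinarith
  convert rpow_natCeil_neg_logb_lt_div one_lt_two (by positivity) hc1 using 1
  field_simp

theorem sum_rpow_one_add_mul_ite_rpow {ι : Type*} [Fintype ι] [DecidableEq ι] {p : ι → ℝ}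
    (hp : ∀ i, 0 < p i) (hpsum : ∑ i, p i = 1) (j : ι) (z : ℝ) {a : ℝ} (ha : 0 ≤ a) (d : ℝ) :
    ∑ i, p i ^ (1 + d) * (if i = j then z else a / p i) ^ d
      = p j ^ (1 + d) * z ^ d + (1 - p j) * a ^ d := by
  rw [← add_sum_erase _ _ (mem_univ j), if_pos rfl, sum_congr rfl fun i hi => by
      rw [if_neg (ne_of_mem_erase hi), rpow_one_add_mul_div_rpow (hp i) ha],
    ← sum_mul, sum_erase_eq_sub (mem_univ j), hpsum]

theorem div_one_sub_two_rpow_neg_rpow {t : ℝ} (ht : 0 < t) (d : ℝ) :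
    (2 / (1 - (2 : ℝ) ^ (-t))) ^ d
      = (2 : ℝ) ^ (d * t) * ((2 : ℝ) ^ d * ((2 : ℝ) ^ t - 1) ^ (-d)) := by
  have h2t : 1 < (2 : ℝ) ^ t := one_lt_rpow one_lt_two ht
  have h : 2 / (1 - (2 : ℝ) ^ (-t)) = 2 ^ t * 2 / (2 ^ t - 1) := by
    rw [rpow_neg zero_le_two]
    field_simp
  rw [h, div_rpow (by positivity) (by linarith), mul_rpow (by positivity) zero_le_two,
    ← rpow_mul zero_le_two, rpow_neg (by linarith), mul_comm t d]
  ring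

theorem one_div_mul_logb_two_eq_add_one_div_mul_logb_two {d : ℝ} (hd : d ≠ 0) {t x r : ℝ}
    (ht : 0 < t) (hx : 0 < x) (hr : 0 ≤ r) :
    1 / d * logb 2 (x ^ (1 + d) * (2 : ℝ) ^ (d * t) + r ^ (1 + d) * (2 / (1 - (2 : ℝ) ^ (-t))) ^ d)
      = t + 1 / d * logb 2
          (x ^ (1 + d) + (2 : ℝ) ^ d * r ^ (1 + d) * ((2 : ℝ) ^ t - 1) ^ (-d)) := by
  have h2t : 0 < (2 : ℝ) ^ t - 1 := sub_pos.mpr (one_lt_rpow one_lt_two ht)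
  have hX : 0 < x ^ (1 + d) + (2 : ℝ) ^ d * r ^ (1 + d) * ((2 : ℝ) ^ t - 1) ^ (-d) := by
    have := rpow_pos_of_pos hx (1 + d)
    positivity
  rw [div_one_sub_two_rpow_neg_rpow ht,
    show ∀ A B C E F : ℝ, A * B + C * (B * (E * F)) = B * (A + E * C * F) from
      fun _ _ _ _ _ => by ring,
    logb_mul (by positivity) hX.ne', logb_rpow two_pos (by norm_num)]
  field_simp

theorem stmt_8_general (n : ℕ) (hn : 2 ≤ n) (d : ℝ) (hd0 : d ≠ 0)
    (p : Fin n → ℝ) (hp : ∀ i, 0 < p i) (hpsum : ∑ i, p i = 1)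
    (j : Fin n) (lam : ℕ) (hlam : 1 ≤ lam)
    (l : Fin n → ℕ)
    (hl : ∀ i, l i = if i = j then lam
      else ⌈-Real.logb 2 (p i * (1 - (2 : ℝ) ^ (-(lam : ℝ))) / (1 - p j))⌉₊) :
    expRedundancy n d p l < (1 / d) * Real.logb 2
        ((p j) ^ (1 + d) * (2 : ℝ) ^ (d * (lam : ℝ)) +
          (1 - p j) ^ (1 + d) * (2 / (1 - (2 : ℝ) ^ (-(lam : ℝ)))) ^ d) ∧
    (1 / d) * Real.logb 2
        ((p j) ^ (1 + d) * (2 : ℝ) ^ (d * (lam : ℝ)) +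
          (1 - p j) ^ (1 + d) * (2 / (1 - (2 : ℝ) ^ (-(lam : ℝ)))) ^ d)
      = (lam : ℝ) + (1 / d) * Real.logb 2
        ((p j) ^ (1 + d) +
          (2 : ℝ) ^ d * (1 - p j) ^ (1 + d) * ((2 : ℝ) ^ (lam : ℝ) - 1) ^ (-d)) := by
  set q : ℝ := 1 - (2 : ℝ) ^ (-(lam : ℝ))
  obtain ⟨hq0, hq1⟩ : 0 < q ∧ q ≤ 1 := ⟨sub_pos.mpr (rpow_lt_one_of_one_lt_of_neg one_lt_two
    (neg_lt_zero.mpr (Nat.cast_pos.mpr hlam))), sub_le_self _ (rpow_nonneg zero_le_two _)⟩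
  obtain ⟨k, hk⟩ := Fintype.exists_ne_of_one_lt_card (by rw [Fintype.card_fin]; omega) j
  have hpj : 0 < 1 - p j := by
    linarith [add_le_one_of_sum_eq_one (fun i => (hp i).le) hpsum hk, hp k]
  set y : Fin n → ℝ := fun i => if i = j then 2 ^ (lam : ℝ) else (1 - p j) * (2 / q) / p i
  have hly : ∀ i, i ≠ j → (2 : ℝ) ^ (l i : ℝ) < y i := fun i hij => by
    simpa only [y, if_neg hij, hl i] using rpow_natCeil_neg_logb_lt_of_ne hp hpsum hq0 hq1 hij
  have hle : ∀ i, (2 : ℝ) ^ (l i : ℝ) ≤ y i := fun i => by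
    by_cases hij : i = j
    · simp [y, hij, hl j]
    · exact (hly i hij).le
  refine ⟨?_, one_div_mul_logb_two_eq_add_one_div_mul_logb_two hd0 (Nat.cast_pos.mpr hlam)
    (hp j) hpj.le⟩
  calc expRedundancy n d p l
        = 1 / d * logb 2 (∑ i, p i ^ (1 + d) * ((2 : ℝ) ^ (l i : ℝ)) ^ d) := by
        simp only [expRedundancy, ← rpow_mul zero_le_two, mul_comm d]
    _ < 1 / d * logb 2 (∑ i, p i ^ (1 + d) * y i ^ d) :=
        one_div_mul_logb_sum_mul_rpow_lt one_lt_two hd0 (fun i => rpow_pos_of_pos (hp i) _)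
          (fun i => rpow_pos_of_pos two_pos _) hle (hly k hk)
    _ = _ := by
        rw [sum_rpow_one_add_mul_ite_rpow hp hpsum j _ (by positivity),
          mul_rpow hpj.le (by positivity), rpow_add hpj, rpow_one, ← rpow_mul zero_le_two,
          mul_comm (lam : ℝ) d, mul_assoc]

theorem stmt_8 (n : ℕ) (hn : 2 ≤ n) (d : ℝ) (hd : -1 < d) (hd0 : d ≠ 0)
    (p : Fin n → ℝ) (hp : ∀ i, 0 < p i) (hpsum : ∑ i, p i = 1)
    (j : Fin n) (lam : ℕ) (hlam : 1 ≤ lam)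
    (l : Fin n → ℕ)
    (hl : ∀ i, l i = if i = j then lam
      else ⌈-Real.logb 2 (p i * (1 - (2 : ℝ) ^ (-(lam : ℝ))) / (1 - p j))⌉₊) :
    expRedundancy n d p l < (1 / d) * Real.logb 2
        ((p j) ^ (1 + d) * (2 : ℝ) ^ (d * (lam : ℝ)) +
          (1 - p j) ^ (1 + d) * (2 / (1 - (2 : ℝ) ^ (-(lam : ℝ)))) ^ d) ∧
    (1 / d) * Real.logb 2
        ((p j) ^ (1 + d) * (2 : ℝ) ^ (d * (lam : ℝ)) +
          (1 - p j) ^ (1 + d) * (2 / (1 - (2 : ℝ) ^ (-(lam : ℝ)))) ^ d)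
      = (lam : ℝ) + (1 / d) * Real.logb 2
        ((p j) ^ (1 + d) +
          (2 : ℝ) ^ d * (1 - p j) ^ (1 + d) * ((2 : ℝ) ^ (lam : ℝ) - 1) ^ (-d)) :=
  stmt_8_general n hn d hd0 p hp hpsum j lam hlam l hl
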